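/- arXiv:1111.5700 — 4 statements merged into one kernel-verified Lean document; each statement's English description precedes it below -/
import Mathlib

section
/- Let γ and η be real numbers with γ > η + 1 > 0. Then there exist constants 0 < c ≤ C < ∞, depending only on γ and η, such that for all real numbers 0 < B < A < D one has c · [(D−B) A^{η+1} (A−B)^{γ−η−1}]^{-1} ≤ ∫_{-1}^{1} (1−s²)^η / ((D−Bs)(A−Bs)^γ) ds ≤ C · [(D−B) A^{η+1} (A−B)^{γ−η−1}]^{-1}. -/
/-!
Substituting `s = 1 - u`, and noting that `s ↦ -s` can only increase the integrand on `[-1, 0]`,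
the integral is comparable, up to the factors `2 ^ (±|η|)` and `2`, to the model integral
`∫₀¹ u ^ η / ((d + b u) (a + b u) ^ γ) du` with `a = A - B`, `b = B`, `d = D - B`.
Split it at `σ = a / (a + b)`, where `b u` reaches the size of `a`. For `u ≤ σ` one has
`d + b u ≍ d` and `a + b u ≍ a`; for `u ≥ σ` one has `a + b u ≥ (a + b) u`, and since `γ > η + 1`
the tail `∫_σ^1 u ^ (η - γ) du ≤ σ ^ (η - γ + 1) / (γ - η - 1)` is governed by its lower endpoint.
Both pieces are thus `≍ σ ^ (η + 1) / (d a ^ γ) = (d (a + b) ^ (η + 1) a ^ (γ - η - 1))⁻¹`.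
-/

open MeasureTheory Real Set intervalIntegral

theorem rpow_le_two_rpow_abs {t : ℝ} (η : ℝ) (h1 : 1 ≤ t) (h2 : t ≤ 2) : t ^ η ≤ 2 ^ |η| :=
  (rpow_le_rpow_of_exponent_le h1 (le_abs_self η)).trans
    (rpow_le_rpow (by linarith) h2 (abs_nonneg η))

theorem two_rpow_neg_abs_le_rpow {t : ℝ} (η : ℝ) (h1 : 1 ≤ t) (h2 : t ≤ 2) : 2 ^ (-|η|) ≤ t ^ η :=
  (rpow_le_rpow_of_nonpos (by linarith) h2 (neg_nonpos.2 (abs_nonneg η))).trans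
    (rpow_le_rpow_of_exponent_le h1 (neg_abs_le η))

theorem integral_rpow_zero_left {η : ℝ} (hη : -1 < η) (x : ℝ) :
    ∫ u in (0 : ℝ)..x, u ^ η = x ^ (η + 1) / (η + 1) := by
  rw [integral_rpow (Or.inl hη), zero_rpow (by linarith), sub_zero]

theorem integral_rpow_le_of_lt_neg_one {r σ : ℝ} (hr : r < -1) (hσ : 0 < σ) (hσ1 : σ ≤ 1) :
    ∫ u in σ..1, u ^ r ≤ σ ^ (r + 1) / -(r + 1) := by
  have h0 : (0 : ℝ) ∉ uIcc σ 1 := by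
    rw [uIcc_of_le hσ1]; exact fun h => hσ.not_ge h.1
  rw [integral_rpow (Or.inr ⟨hr.ne, h0⟩), one_rpow, ← neg_div_neg_eq, neg_sub]
  exact div_le_div_of_nonneg_right (sub_le_self _ zero_le_one) (by linarith)

theorem IntervalIntegrable.div_mul_rpow {w p q : ℝ → ℝ} {x y γ : ℝ}
    (hw : IntervalIntegrable w volume x y) (hp : ContinuousOn p (uIcc x y))
    (hq : ContinuousOn q (uIcc x y)) (hp0 : ∀ s ∈ uIcc x y, 0 < p s)
    (hq0 : ∀ s ∈ uIcc x y, 0 < q s) :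
    IntervalIntegrable (fun s => w s / (p s * q s ^ γ)) volume x y := by
  simp only [div_eq_mul_inv]
  refine hw.mul_continuousOn ((hp.mul (hq.rpow_const fun s hs => Or.inl (hq0 s hs).ne')).inv₀ ?_)
  exact fun s hs => (mul_pos (hp0 s hs) (rpow_pos_of_pos (hq0 s hs) γ)).ne'

theorem intervalIntegrable_one_sub_sq_rpow {η : ℝ} (hη : -1 < η) :
    IntervalIntegrable (fun s : ℝ => (1 - s ^ 2) ^ η) volume (-1) 1 := by
  have hright : IntervalIntegrable (fun s : ℝ => (1 - s ^ 2) ^ η) volume 0 1 := by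
    have h := ((intervalIntegrable_rpow' hη (a := 0) (b := 1)).comp_sub_left 1).symm
    norm_num at h
    refine (h.mul_continuousOn (g := fun s : ℝ => (1 + s) ^ η) ?_).congr fun s hs => ?_
    · refine ContinuousOn.rpow_const (f := fun s => 1 + s) (by fun_prop) fun s hs => Or.inl ?_
      rw [uIcc_of_le zero_le_one] at hs
      linarith [hs.1]
    · rw [uIoc_of_le zero_le_one] at hs
      rw [← mul_rpow (by linarith [hs.2]) (by linarith [hs.1])]
      ring_nf
  have hleft := ((IntervalIntegrable.iff_comp_neg).mp hright).symm
  simp only [neg_sq, neg_zero] at hleft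
  exact hleft.trans hright

theorem integral_le_two_mul_integral_of_neg_le {f : ℝ → ℝ} {c : ℝ} (hc : 0 ≤ c)
    (hf : IntervalIntegrable f volume (-c) c) (h : ∀ x ∈ Icc 0 c, f (-x) ≤ f x) :
    ∫ x in -c..c, f x ≤ 2 * ∫ x in (0 : ℝ)..c, f x := by
  have hmem : (0 : ℝ) ∈ uIcc (-c) c := by rw [uIcc_of_le (by linarith)]; exact ⟨by linarith, hc⟩
  have hl : IntervalIntegrable f volume (-c) 0 := hf.mono_set (uIcc_subset_uIcc_left hmem)
  have hr : IntervalIntegrable f volume 0 c := hf.mono_set (uIcc_subset_uIcc_right hmem)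
  have hl' : IntervalIntegrable (fun x => f (-x)) volume 0 c := by
    simpa using ((IntervalIntegrable.iff_comp_neg).mp hl).symm
  have hreflect : ∫ x in -c..0, f x = ∫ x in (0 : ℝ)..c, f (-x) := by
    rw [integral_comp_neg, neg_zero]
  rw [← integral_add_adjacent_intervals hl hr, hreflect, two_mul]
  exact add_le_add_left (integral_mono_on hc hl' hr h) _

theorem integral_two_sub_rpow_mul_mem_Icc {η : ℝ} {f : ℝ → ℝ}
    (hf : IntervalIntegrable f volume 0 1) (hf0 : ∀ u ∈ Icc (0 : ℝ) 1, 0 ≤ f u) :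
    ∫ u in (0 : ℝ)..1, (2 - u) ^ η * f u ∈
      Icc (2 ^ (-|η|) * ∫ u in (0 : ℝ)..1, f u) (2 ^ |η| * ∫ u in (0 : ℝ)..1, f u) := by
  have hwf : IntervalIntegrable (fun u => (2 - u) ^ η * f u) volume 0 1 := by
    refine hf.continuousOn_mul (ContinuousOn.rpow_const (by fun_prop) fun u hu => Or.inl ?_)
    rw [uIcc_of_le zero_le_one] at hu
    linarith [hu.2]
  rw [← intervalIntegral.integral_const_mul, ← intervalIntegral.integral_const_mul]
  constructor
  · refine integral_mono_on zero_le_one (hf.const_mul _) hwf fun u hu => ?_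
    exact mul_le_mul_of_nonneg_right
      (two_rpow_neg_abs_le_rpow η (by linarith [hu.2]) (by linarith [hu.1])) (hf0 u hu)
  · refine integral_mono_on zero_le_one hwf (hf.const_mul _) fun u hu => ?_
    exact mul_le_mul_of_nonneg_right
      (rpow_le_two_rpow_abs η (by linarith [hu.2]) (by linarith [hu.1])) (hf0 u hu)

section Model

variable {η γ a b d x : ℝ}

theorem inv_mul_rpow_eq_div_rpow (ha : 0 < a) (hx : 0 < x) :
    (d * x ^ (η + 1) * a ^ (γ - η - 1))⁻¹ = (a / x) ^ (η + 1) / (d * a ^ γ) := by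
  have : a ^ (γ - η - 1) = a ^ γ / a ^ (η + 1) := by
    rw [← rpow_sub ha]; ring_nf
  rw [this, div_rpow ha.le hx.le]
  have := rpow_pos_of_pos ha (η + 1)
  field_simp

theorem rpow_div_mul_rpow_nonneg (ha : 0 ≤ a) (hb : 0 ≤ b) (hd : 0 ≤ d) {u : ℝ} (hu : 0 ≤ u) :
    0 ≤ u ^ η / ((d + b * u) * (a + b * u) ^ γ) := by
  positivity

theorem intervalIntegrable_rpow_div_mul_rpow (hη : -1 < η) (ha : 0 < a) (hb : 0 ≤ b) (hd : 0 < d)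
    {y : ℝ} (hx : 0 ≤ x) (hy : 0 ≤ y) :
    IntervalIntegrable (fun u => u ^ η / ((d + b * u) * (a + b * u) ^ γ)) volume x y := by
  refine (intervalIntegrable_rpow' hη).div_mul_rpow (by fun_prop) (by fun_prop) ?_ ?_ <;>
  · intro u hu
    have : 0 ≤ u := (le_min hx hy).trans hu.1
    positivity

theorem le_integral_rpow_div_mul_rpow (hη : -1 < η) (hγ : 0 ≤ γ) (ha : 0 < a) (hb : 0 ≤ b)
    (had : a ≤ d) :
    ((η + 1) * 2 ^ (γ + 1))⁻¹ * (d * (a + b) ^ (η + 1) * a ^ (γ - η - 1))⁻¹ ≤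
      ∫ u in (0 : ℝ)..1, u ^ η / ((d + b * u) * (a + b * u) ^ γ) := by
  have hd : 0 < d := ha.trans_le had
  set σ := a / (a + b) with hσ
  have hσ0 : 0 < σ := by positivity
  have hσ1 : σ ≤ 1 := (div_le_one (by linarith)).2 (by linarith)
  have hbσ : b * σ ≤ a := by
    rw [hσ, mul_div_left_comm]
    exact mul_le_of_le_one_right ha.le ((div_le_one (by linarith)).2 (by linarith))
  have hpt : ∀ u ∈ Icc 0 σ,
      u ^ η / (2 * d * (2 * a) ^ γ) ≤ u ^ η / ((d + b * u) * (a + b * u) ^ γ) := by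
    intro u hu
    have hbu : b * u ≤ a := (mul_le_mul_of_nonneg_left hu.2 hb).trans hbσ
    have hbu0 : 0 ≤ b * u := mul_nonneg hb hu.1
    refine div_le_div_of_nonneg_left (rpow_nonneg hu.1 η)
      (mul_pos (by linarith) (rpow_pos_of_pos (by linarith) γ))
      (mul_le_mul (by linarith) (rpow_le_rpow (by linarith) (by linarith) hγ)
        (by positivity) (by linarith))
  calc ((η + 1) * 2 ^ (γ + 1))⁻¹ * (d * (a + b) ^ (η + 1) * a ^ (γ - η - 1))⁻¹
      = (∫ u in (0 : ℝ)..σ, u ^ η) / (2 * d * (2 * a) ^ γ) := by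
        rw [inv_mul_rpow_eq_div_rpow ha (by linarith), ← hσ, integral_rpow_zero_left hη,
          rpow_add_one two_ne_zero, mul_rpow zero_le_two ha.le]
        field_simp
    _ = ∫ u in (0 : ℝ)..σ, u ^ η / (2 * d * (2 * a) ^ γ) := (intervalIntegral.integral_div _ _).symm
    _ ≤ ∫ u in (0 : ℝ)..σ, u ^ η / ((d + b * u) * (a + b * u) ^ γ) :=
        integral_mono_on hσ0.le ((intervalIntegrable_rpow' hη).div_const _)
          (intervalIntegrable_rpow_div_mul_rpow hη ha hb hd le_rfl hσ0.le) hpt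
    _ ≤ ∫ u in (0 : ℝ)..1, u ^ η / ((d + b * u) * (a + b * u) ^ γ) :=
        integral_mono_interval le_rfl hσ0.le hσ1
          ((ae_restrict_mem measurableSet_Ioc).mono fun u hu =>
            rpow_div_mul_rpow_nonneg ha.le hb hd.le hu.1.le)
          (intervalIntegrable_rpow_div_mul_rpow hη ha hb hd le_rfl zero_le_one)

theorem integral_rpow_div_mul_rpow_head_le (hη : -1 < η) (hγ : 0 ≤ γ) (ha : 0 < a) (hb : 0 ≤ b)
    (hd : 0 < d) {σ : ℝ} (hσ : 0 ≤ σ) :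
    ∫ u in (0 : ℝ)..σ, u ^ η / ((d + b * u) * (a + b * u) ^ γ) ≤
      σ ^ (η + 1) / ((η + 1) * (d * a ^ γ)) := by
  calc _ ≤ ∫ u in (0 : ℝ)..σ, u ^ η / (d * a ^ γ) := by
        refine integral_mono_on hσ (intervalIntegrable_rpow_div_mul_rpow hη ha hb hd le_rfl hσ)
          ((intervalIntegrable_rpow' hη).div_const _) fun u hu => ?_
        have := mul_nonneg hb hu.1
        exact div_le_div_of_nonneg_left (rpow_nonneg hu.1 η) (by positivity)
          (mul_le_mul (by linarith) (rpow_le_rpow ha.le (by linarith) hγ)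
            (by positivity) (by linarith))
    _ = σ ^ (η + 1) / ((η + 1) * (d * a ^ γ)) := by
        rw [intervalIntegral.integral_div, integral_rpow_zero_left hη, div_div]

theorem integral_rpow_div_mul_rpow_tail_le (hη : -1 < η) (hγ : η + 1 < γ) (ha : 0 < a)
    (hb : 0 ≤ b) (hd : 0 < d) {σ : ℝ} (hσ0 : 0 < σ) (hσ1 : σ ≤ 1) :
    ∫ u in σ..1, u ^ η / ((d + b * u) * (a + b * u) ^ γ) ≤
      σ ^ (η - γ + 1) / ((γ - η - 1) * (d * (a + b) ^ γ)) := by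
  have h0 : (0 : ℝ) ∉ uIcc σ 1 := by
    rw [uIcc_of_le hσ1]; exact fun h => hσ0.not_ge h.1
  calc _ ≤ ∫ u in σ..1, u ^ (η - γ) / (d * (a + b) ^ γ) := by
        refine integral_mono_on hσ1
          (intervalIntegrable_rpow_div_mul_rpow hη ha hb hd hσ0.le zero_le_one)
          ((intervalIntegrable_rpow (Or.inr h0)).div_const _) fun u hu => ?_
        have hu0 : 0 < u := hσ0.trans_le hu.1
        have hlin : (a + b) * u ≤ a + b * u := by nlinarith [hu.2]
        calc _ ≤ u ^ η / (d * ((a + b) * u) ^ γ) :=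
              div_le_div_of_nonneg_left (rpow_nonneg hu0.le η) (by positivity)
                (mul_le_mul (by nlinarith) (rpow_le_rpow (by positivity) hlin (by linarith))
                  (by positivity) (by nlinarith))
          _ = u ^ (η - γ) / (d * (a + b) ^ γ) := by
              rw [mul_rpow (by positivity) hu0.le, rpow_sub hu0]
              have := rpow_pos_of_pos hu0 γ
              field_simp
    _ ≤ σ ^ (η - γ + 1) / -(η - γ + 1) / (d * (a + b) ^ γ) := by
        rw [intervalIntegral.integral_div]
        exact div_le_div_of_nonneg_right
          (integral_rpow_le_of_lt_neg_one (by linarith) hσ0 hσ1) (by positivity)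
    _ = σ ^ (η - γ + 1) / ((γ - η - 1) * (d * (a + b) ^ γ)) := by
        rw [div_div]
        ring

theorem integral_rpow_div_mul_rpow_le (hη : -1 < η) (hγ : η + 1 < γ) (ha : 0 < a) (hb : 0 ≤ b)
    (hd : 0 < d) :
    ∫ u in (0 : ℝ)..1, u ^ η / ((d + b * u) * (a + b * u) ^ γ) ≤
      ((η + 1)⁻¹ + (γ - η - 1)⁻¹) * (d * (a + b) ^ (η + 1) * a ^ (γ - η - 1))⁻¹ := by
  have hab : 0 < a + b := by linarith
  set σ := a / (a + b) with hσ
  have hσ0 : 0 < σ := by positivity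
  have hσ1 : σ ≤ 1 := (div_le_one hab).2 (by linarith)
  have hσa : a ^ γ = σ ^ γ * (a + b) ^ γ := by
    rw [← mul_rpow hσ0.le hab.le, hσ, div_mul_cancel₀ _ hab.ne']
  have hσpos := rpow_pos_of_pos hσ0 γ
  rw [← integral_add_adjacent_intervals
    (intervalIntegrable_rpow_div_mul_rpow hη ha hb hd le_rfl hσ0.le)
    (intervalIntegrable_rpow_div_mul_rpow hη ha hb hd hσ0.le zero_le_one)]
  refine (add_le_add (integral_rpow_div_mul_rpow_head_le hη (by linarith) ha hb hd hσ0.le)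
    (integral_rpow_div_mul_rpow_tail_le hη hγ ha hb hd hσ0 hσ1)).trans_eq ?_
  rw [inv_mul_rpow_eq_div_rpow ha hab, ← hσ, show η - γ + 1 = η + 1 - γ by ring, rpow_sub hσ0, hσa]
  field_simp

end Model

theorem integral_one_sub_sq_rpow_div_eq (η γ A B D : ℝ) :
    ∫ s in (0 : ℝ)..1, (1 - s ^ 2) ^ η / ((D - B * s) * (A - B * s) ^ γ) =
      ∫ u in (0 : ℝ)..1, (2 - u) ^ η * (u ^ η / ((D - B + B * u) * (A - B + B * u) ^ γ)) := by
  have h := integral_comp_sub_left (a := 0) (b := 1)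
    (fun s => (1 - s ^ 2) ^ η / ((D - B * s) * (A - B * s) ^ γ)) 1
  rw [sub_self, sub_zero] at h
  rw [← h]
  refine integral_congr fun u hu => ?_
  rw [uIcc_of_le zero_le_one] at hu
  rw [show 1 - (1 - u) ^ 2 = (2 - u) * u by ring, mul_rpow (by linarith [hu.2]) hu.1,
    show D - B * (1 - u) = D - B + B * u by ring, show A - B * (1 - u) = A - B + B * u by ring,
    mul_div_assoc]

theorem sub_mul_pos_of_le_one {B X s : ℝ} (hB : 0 ≤ B) (hBX : B < X) (hs : s ≤ 1) :
    0 < X - B * s := by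
  nlinarith

section Kernel

variable {η γ A B D : ℝ}

theorem one_sub_sq_rpow_div_nonneg (hB : 0 ≤ B) (hBA : B < A) (hBD : B < D) {s : ℝ}
    (hs : s ∈ Icc (-1 : ℝ) 1) : 0 ≤ (1 - s ^ 2) ^ η / ((D - B * s) * (A - B * s) ^ γ) :=
  div_nonneg (rpow_nonneg (by nlinarith [hs.1, hs.2]) η)
    (mul_pos (sub_mul_pos_of_le_one hB hBD hs.2)
      (rpow_pos_of_pos (sub_mul_pos_of_le_one hB hBA hs.2) γ)).le

theorem one_sub_sq_rpow_div_neg_le (hγ : 0 ≤ γ) (hB : 0 ≤ B) (hBA : B < A) (hBD : B < D)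
    {s : ℝ} (hs : s ∈ Icc (0 : ℝ) 1) :
    (1 - (-s) ^ 2) ^ η / ((D - B * -s) * (A - B * -s) ^ γ) ≤
      (1 - s ^ 2) ^ η / ((D - B * s) * (A - B * s) ^ γ) := by
  have hD := sub_mul_pos_of_le_one hB hBD hs.2
  have hA := sub_mul_pos_of_le_one hB hBA hs.2
  have hBs : 0 ≤ B * s := mul_nonneg hB hs.1
  rw [neg_sq]
  exact div_le_div_of_nonneg_left (rpow_nonneg (by nlinarith [hs.1, hs.2]) η)
    (mul_pos hD (rpow_pos_of_pos hA γ))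
    (mul_le_mul (by linarith) (rpow_le_rpow hA.le (by linarith) hγ)
      (rpow_pos_of_pos hA γ).le (by linarith))

theorem intervalIntegrable_one_sub_sq_rpow_div (hη : -1 < η) (hB : 0 ≤ B) (hBA : B < A)
    (hBD : B < D) :
    IntervalIntegrable (fun s => (1 - s ^ 2) ^ η / ((D - B * s) * (A - B * s) ^ γ)) volume
      (-1) 1 := by
  refine (intervalIntegrable_one_sub_sq_rpow hη).div_mul_rpow (by fun_prop) (by fun_prop)
    ?_ ?_ <;> rw [uIcc_of_le (by norm_num)]
  exacts [fun s hs => sub_mul_pos_of_le_one hB hBD hs.2,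
    fun s hs => sub_mul_pos_of_le_one hB hBA hs.2]

theorem le_integral_one_sub_sq_rpow_div (hη : -1 < η) (hγ : 0 ≤ γ) (hB : 0 ≤ B) (hBA : B < A)
    (hAD : A ≤ D) :
    2 ^ (-|η|) * ((η + 1) * 2 ^ (γ + 1))⁻¹ * ((D - B) * A ^ (η + 1) * (A - B) ^ (γ - η - 1))⁻¹ ≤
      ∫ s in (-1 : ℝ)..1, (1 - s ^ 2) ^ η / ((D - B * s) * (A - B * s) ^ γ) := by
  have hAB : 0 < A - B := sub_pos.2 hBA
  have hDB : 0 < D - B := by linarith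
  have hmodel := le_integral_rpow_div_mul_rpow hη hγ hAB hB (by linarith : A - B ≤ D - B)
  rw [sub_add_cancel] at hmodel
  calc _ = 2 ^ (-|η|) * (((η + 1) * 2 ^ (γ + 1))⁻¹ *
          ((D - B) * A ^ (η + 1) * (A - B) ^ (γ - η - 1))⁻¹) := mul_assoc _ _ _
    _ ≤ 2 ^ (-|η|) * ∫ u in (0 : ℝ)..1, u ^ η / ((D - B + B * u) * (A - B + B * u) ^ γ) :=
        mul_le_mul_of_nonneg_left hmodel (by positivity)
    _ ≤ ∫ u in (0 : ℝ)..1, (2 - u) ^ η * (u ^ η / ((D - B + B * u) * (A - B + B * u) ^ γ)) :=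
        (integral_two_sub_rpow_mul_mem_Icc
          (intervalIntegrable_rpow_div_mul_rpow hη hAB hB hDB le_rfl zero_le_one)
          fun u hu => rpow_div_mul_rpow_nonneg hAB.le hB hDB.le hu.1).1
    _ = ∫ s in (0 : ℝ)..1, (1 - s ^ 2) ^ η / ((D - B * s) * (A - B * s) ^ γ) :=
        (integral_one_sub_sq_rpow_div_eq η γ A B D).symm
    _ ≤ _ := integral_mono_interval (by norm_num) zero_le_one le_rfl
        ((ae_restrict_mem measurableSet_Ioc).mono fun s hs =>
          one_sub_sq_rpow_div_nonneg hB hBA (hBA.trans_le hAD) (Ioc_subset_Icc_self hs))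
        (intervalIntegrable_one_sub_sq_rpow_div hη hB hBA (hBA.trans_le hAD))

theorem integral_one_sub_sq_rpow_div_le (hη : -1 < η) (hγ : η + 1 < γ) (hB : 0 ≤ B)
    (hBA : B < A) (hBD : B < D) :
    ∫ s in (-1 : ℝ)..1, (1 - s ^ 2) ^ η / ((D - B * s) * (A - B * s) ^ γ) ≤
      2 * 2 ^ |η| * ((η + 1)⁻¹ + (γ - η - 1)⁻¹) *
        ((D - B) * A ^ (η + 1) * (A - B) ^ (γ - η - 1))⁻¹ := by
  have hAB : 0 < A - B := sub_pos.2 hBA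
  have hDB : 0 < D - B := sub_pos.2 hBD
  have hmodel := integral_rpow_div_mul_rpow_le hη hγ hAB hB hDB
  rw [sub_add_cancel] at hmodel
  calc _ ≤ 2 * ∫ s in (0 : ℝ)..1, (1 - s ^ 2) ^ η / ((D - B * s) * (A - B * s) ^ γ) :=
        integral_le_two_mul_integral_of_neg_le zero_le_one
          (intervalIntegrable_one_sub_sq_rpow_div hη hB hBA hBD)
          fun s hs => one_sub_sq_rpow_div_neg_le (by linarith) hB hBA hBD hs
    _ = 2 * ∫ u in (0 : ℝ)..1, (2 - u) ^ η * (u ^ η / ((D - B + B * u) * (A - B + B * u) ^ γ)) := by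
        rw [integral_one_sub_sq_rpow_div_eq]
    _ ≤ 2 * (2 ^ |η| * ∫ u in (0 : ℝ)..1, u ^ η / ((D - B + B * u) * (A - B + B * u) ^ γ)) :=
        mul_le_mul_of_nonneg_left (integral_two_sub_rpow_mul_mem_Icc
          (intervalIntegrable_rpow_div_mul_rpow hη hAB hB hDB le_rfl zero_le_one)
          fun u hu => rpow_div_mul_rpow_nonneg hAB.le hB hDB.le hu.1).2 zero_le_two
    _ ≤ 2 * (2 ^ |η| * (((η + 1)⁻¹ + (γ - η - 1)⁻¹) *
          ((D - B) * A ^ (η + 1) * (A - B) ^ (γ - η - 1))⁻¹)) := by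
        gcongr
    _ = _ := by ring

end Kernel

/-- **Lemma 3.3 (Nowak–Roncal).** For `γ > η + 1 > 0` one has
`∫_{-1}^1 (1-s²)^η / ((D-Bs)(A-Bs)^γ) ds ≃ [(D-B) A^{η+1} (A-B)^{γ-η-1}]⁻¹`,
uniformly in `0 < B < A < D`. -/
theorem fb_integral_lemma (γ η : ℝ) (hη : 0 < η + 1) (hγ : η + 1 < γ) :
    ∃ c C : ℝ, 0 < c ∧ c ≤ C ∧
      ∀ A B D : ℝ, 0 < B → B < A → A < D →
        (c * ((D - B) * A ^ (η + 1) * (A - B) ^ (γ - η - 1))⁻¹ ≤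
            ∫ s in Set.Ioo (-1 : ℝ) 1,
              (1 - s ^ 2) ^ η / ((D - B * s) * (A - B * s) ^ γ)) ∧
          (∫ s in Set.Ioo (-1 : ℝ) 1,
              (1 - s ^ 2) ^ η / ((D - B * s) * (A - B * s) ^ γ)) ≤
            C * ((D - B) * A ^ (η + 1) * (A - B) ^ (γ - η - 1))⁻¹ := by
  have hη' : -1 < η := by linarith
  set c := 2 ^ (-|η|) * ((η + 1) * 2 ^ (γ + 1))⁻¹
  set C := 2 * 2 ^ |η| * ((η + 1)⁻¹ + (γ - η - 1)⁻¹)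
  refine ⟨c, max c C, by positivity, le_max_left _ _, fun A B D hB hBA hAD => ?_⟩
  have hP : 0 < (D - B) * A ^ (η + 1) * (A - B) ^ (γ - η - 1) :=
    mul_pos (mul_pos (by linarith) (rpow_pos_of_pos (hB.trans hBA) _))
      (rpow_pos_of_pos (sub_pos.2 hBA) _)
  rw [← integral_Ioc_eq_integral_Ioo, ← intervalIntegral.integral_of_le (by norm_num)]
  exact ⟨le_integral_one_sub_sq_rpow_div hη' (by linarith) hB.le hBA hAD.le,
    (integral_one_sub_sq_rpow_div_le hη' hγ hB.le hBA (hBA.trans hAD)).trans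
      (mul_le_mul_of_nonneg_right (le_max_right c C) (inv_nonneg.2 hP.le))⟩
end

section
/- Let d ≥ 1 and let x, y, t, c > 0. Set ν = d/2 − 1 and let 𝚡 = (x, 0, …, 0) ∈ ℝ^d. Then ∫_{S^{d−1}} exp(−|𝚡 − yξ|²/(ct)) dσ(ξ) = (2π)^{ν+1} exp(−(x²+y²)/(ct)) · (ct/(2xy))^{ν} · I_ν(2xy/(ct)), where I_ν is the modified Bessel function of the first kind of order ν. -/
/-!
On the unit sphere `‖𝚡 - y ξ‖² = x² + y² - 2 x y ξ₀`, so the integral is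
`exp (-(x² + y²)/(ct))` times `∫ exp (a ξ₀) dσ` with `a = 2xy/(ct)`. Expanding the exponential
turns the latter into `∑ aᵐ Mₘ / m!` with the moments `Mₘ = ∫ ξ₀ᵐ dσ`. Integrating
`z₀ᵐ exp (-‖z‖²)` over `ℝᵈ` once as a product of one-dimensional Gaussian integrals and once in
polar coordinates gives `Γ((m + d)/2)/2 · Mₘ = (∫ wᵐ exp (-w²) dw) · π^((d-1)/2)`. Hence the odd
moments vanish, and by Legendre's duplication formula the even ones produce exactly the power
series of `I_ν`.
-/

open MeasureTheory Real

noncomputable def besselI (ν x : ℝ) : ℝ :=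
  ∑' k : ℕ, (x / 2) ^ (2 * (k : ℝ) + ν) / (k.factorial * Real.Gamma (k + ν + 1))

open Set Metric

theorem integrable_pow_mul_exp_neg_sq (n : ℕ) : Integrable fun w : ℝ ↦ w ^ n * exp (-w ^ 2) := by
  simpa using
    integrable_rpow_mul_exp_neg_mul_sq one_pos (s := n) (by linarith [n.cast_nonneg (α := ℝ)])

theorem integral_Ioi_pow_mul_exp_neg_sq (n : ℕ) :
    ∫ r in Ioi (0 : ℝ), r ^ n * exp (-r ^ 2) = Gamma ((n + 1) / 2) / 2 := by
  have h := integral_rpow_mul_exp_neg_rpow two_pos (q := n) (by linarith [n.cast_nonneg (α := ℝ)])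
  norm_cast at h
  rw [h, Nat.cast_succ]
  ring

theorem integral_pow_mul_exp_neg_sq_of_odd {n : ℕ} (hn : Odd n) :
    ∫ w : ℝ, w ^ n * exp (-w ^ 2) = 0 := by
  have h := integral_neg_eq_self (fun w : ℝ ↦ w ^ n * exp (-w ^ 2)) volume
  simp only [neg_sq, hn.neg_pow, neg_mul, integral_neg] at h
  linarith

theorem integral_pow_two_mul_mul_exp_neg_sq (k : ℕ) :
    ∫ w : ℝ, w ^ (2 * k) * exp (-w ^ 2) = Gamma (k + 1 / 2) := by
  have h := integral_comp_abs (f := fun w : ℝ ↦ w ^ (2 * k) * exp (-w ^ 2))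
  simp only [(even_two_mul k).pow_abs, sq_abs] at h
  rw [h, integral_Ioi_pow_mul_exp_neg_sq]
  push_cast
  ring_nf

theorem Gamma_nat_add_half_eq_factorial (k : ℕ) :
    Gamma (k + 1 / 2) = (2 * k).factorial * √π / (4 ^ k * k.factorial) := by
  have h := Gamma_mul_Gamma_add_half (k + 1 / 2)
  rw [show (k : ℝ) + 1 / 2 + 1 / 2 = k + 1 by ring,
    show 2 * ((k : ℝ) + 1 / 2) = (2 * k : ℕ) + 1 by push_cast; ring,
    show 1 - ((2 * k : ℕ) + 1 : ℝ) = -(2 * k : ℕ) by ring, Gamma_nat_eq_factorial,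
    Gamma_nat_eq_factorial, rpow_neg two_pos.le, rpow_natCast, pow_mul] at h
  rw [eq_div_iff (by positivity)]
  calc Gamma (k + 1 / 2) * (4 ^ k * k.factorial) = 4 ^ k * (Gamma (k + 1 / 2) * k.factorial) := by
        ring
    _ = _ := by
        rw [h]
        field_simp
        norm_num

theorem besselI_eq_rpow_mul_tsum (ν : ℝ) {z : ℝ} (hz : 0 < z) :
    besselI ν z =
      (z / 2) ^ ν * ∑' k : ℕ, (z / 2) ^ (2 * k) / (k.factorial * Gamma (k + ν + 1)) := by
  rw [besselI, ← tsum_mul_left]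
  congr 1 with k
  rw [rpow_add (by positivity), ← Nat.cast_ofNat, ← Nat.cast_mul, rpow_natCast]
  ring

section Polar

variable {E F : Type*} [NormedAddCommGroup E] [NormedSpace ℝ E] [MeasurableSpace E]
  [BorelSpace E] [FiniteDimensional ℝ E] [Nontrivial E] (μ : Measure E) [μ.IsAddHaarMeasure]
  [NormedAddCommGroup F] [NormedSpace ℝ F]

theorem integral_eq_integral_sphere_integral_Ioi {f : E → F} (hf : Integrable f μ) :
    ∫ x, f x ∂μ = ∫ ξ : sphere (0 : E) 1,
      (∫ r in Ioi (0 : ℝ), r ^ (Module.finrank ℝ E - 1) • f (r • (ξ : E))) ∂μ.toSphere := by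
  set g : sphere (0 : E) 1 × Ioi (0 : ℝ) → F := fun p ↦ f ((p.2 : ℝ) • (p.1 : E))
  have hpolar := μ.measurePreserving_homeomorphUnitSphereProd
  have hemb := (homeomorphUnitSphereProd E).measurableEmbedding
  have hg (x : ({0}ᶜ : Set E)) : g (homeomorphUnitSphereProd E x) = f x := by
    simp [g, smul_inv_smul₀ (norm_ne_zero_iff.2 x.2)]
  have hg_int :
      Integrable g (μ.toSphere.prod (Measure.volumeIoiPow (Module.finrank ℝ E - 1))) := by
    rw [← hpolar.integrable_comp_emb hemb]
    refine ((integrableOn_iff_comap_subtypeVal (measurableSet_singleton 0).compl).1 ?_).congr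
      (.of_forall fun x ↦ (hg x).symm)
    rwa [IntegrableOn, restrict_compl_singleton]
  calc ∫ x, f x ∂μ = ∫ x : ({0}ᶜ : Set E), f x ∂μ.comap Subtype.val := by
        rw [integral_subtype_comap (measurableSet_singleton _).compl,
          restrict_compl_singleton]
    _ = ∫ p, g p ∂μ.toSphere.prod (Measure.volumeIoiPow (Module.finrank ℝ E - 1)) := by
        simp only [← hpolar.integral_comp hemb, hg]
    _ = _ := by
        rw [integral_prod g hg_int]
        refine integral_congr_ae (.of_forall fun ξ ↦ ?_)
        simp only [g, Measure.volumeIoiPow, ENNReal.ofReal]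
        rw [integral_withDensity_eq_integral_smul
            (measurable_subtype_coe.pow_const _).real_toNNReal,
          integral_subtype_comap measurableSet_Ioi
            fun r ↦ Real.toNNReal (r ^ (Module.finrank ℝ E - 1)) • f (r • (ξ : E))]
        refine setIntegral_congr_fun measurableSet_Ioi fun r hr ↦ ?_
        rw [NNReal.smul_def, Real.coe_toNNReal _ (pow_nonneg hr.out.le _)]

end Polar

section Euclidean

variable {ι : Type*} [Fintype ι]

theorem pow_mul_exp_neg_norm_sq_toLp_eq_prod [DecidableEq ι] (i : ι) (n : ℕ) (v : ι → ℝ) :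
    v i ^ n * exp (-‖(WithLp.toLp 2 v : EuclideanSpace ℝ ι)‖ ^ 2)
      = ∏ j, v j ^ (if j = i then n else 0) * exp (-v j ^ 2) := by
  rw [Finset.prod_mul_distrib, ← exp_sum, Finset.sum_neg_distrib, EuclideanSpace.real_norm_sq_eq]
  simp [pow_ite]

theorem integrable_coord_pow_mul_exp_neg_norm_sq (i : ι) (n : ℕ) :
    Integrable fun z : EuclideanSpace ℝ ι ↦ z i ^ n * exp (-‖z‖ ^ 2) := by
  classical
  rw [← (PiLp.volume_preserving_toLp ι).integrable_comp_emb
    (MeasurableEquiv.toLp 2 (ι → ℝ)).measurableEmbedding]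
  simp only [Function.comp_def, pow_mul_exp_neg_norm_sq_toLp_eq_prod]
  exact Integrable.fintype_prod (f := fun j w ↦ w ^ (if j = i then n else 0) * exp (-w ^ 2))
    fun j ↦ integrable_pow_mul_exp_neg_sq _

theorem integral_coord_pow_mul_exp_neg_norm_sq (i : ι) (n : ℕ) :
    ∫ z : EuclideanSpace ℝ ι, z i ^ n * exp (-‖z‖ ^ 2)
      = (∫ w : ℝ, w ^ n * exp (-w ^ 2)) * √π ^ (Fintype.card ι - 1) := by
  classical
  rw [← (PiLp.volume_preserving_toLp ι).integral_comp
    (MeasurableEquiv.toLp 2 (ι → ℝ)).measurableEmbedding]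
  simp only [pow_mul_exp_neg_norm_sq_toLp_eq_prod]
  rw [integral_fintype_prod_volume_eq_prod
      (f := fun j w ↦ w ^ (if j = i then n else 0) * exp (-w ^ 2)),
    ← Finset.mul_prod_erase _ _ (Finset.mem_univ i),
    Finset.prod_congr rfl fun j hj ↦ by rw [if_neg (Finset.ne_of_mem_erase hj)],
    Finset.prod_const, Finset.card_erase_of_mem (Finset.mem_univ i), Finset.card_univ]
  have hgauss : ∫ w : ℝ, w ^ 0 * exp (-w ^ 2) = √π := by simpa using integral_gaussian 1
  rw [if_pos rfl, hgauss]

end Euclidean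

theorem hasSum_integral_pow_div_factorial {α : Type*} [MeasurableSpace α] {μ : Measure α}
    [IsFiniteMeasure μ] {u : α → ℝ} {C : ℝ} (hu : AEStronglyMeasurable u μ)
    (hC : ∀ᵐ x ∂μ, |u x| ≤ C) :
    HasSum (fun m : ℕ ↦ (∫ x, u x ^ m ∂μ) / m.factorial) (∫ x, exp (u x) ∂μ) := by
  have hbound (m : ℕ) : ∀ᵐ x ∂μ, ‖u x ^ m / m.factorial‖ ≤ C ^ m / m.factorial := by
    filter_upwards [hC] with x hx
    rw [norm_div, norm_pow, Real.norm_eq_abs, RCLike.norm_natCast]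
    gcongr
  have hint (m : ℕ) : Integrable (fun x ↦ u x ^ m / m.factorial) μ :=
    .of_bound (by fun_prop) _ (hbound m)
  have hsum : Summable fun m : ℕ ↦ ∫ x, ‖u x ^ m / m.factorial‖ ∂μ := by
    refine .of_norm_bounded ((summable_pow_div_factorial C).mul_right (μ.real Set.univ))
      fun m ↦ ?_
    simpa using norm_integral_le_of_norm_le_const (f := fun x ↦ ‖u x ^ m / m.factorial‖)
      (by simpa using hbound m)
  have hexp (x : α) : ∑' m : ℕ, u x ^ m / m.factorial = exp (u x) := by
    rw [Real.exp_eq_exp_ℝ, NormedSpace.exp_eq_tsum_div]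
  simpa [integral_div, hexp] using
    hasSum_integral_of_summable_integral_norm hint hsum

section Sphere

variable {ι : Type*} [Fintype ι]

local notation "σ" => Measure.toSphere (volume : Measure (EuclideanSpace ℝ ι))

theorem Gamma_mul_integral_sphere_coord_pow (i : ι) (n : ℕ) :
    Gamma ((n + Fintype.card ι) / 2) / 2 *
        ∫ ξ : sphere (0 : EuclideanSpace ℝ ι) 1, (ξ : EuclideanSpace ℝ ι) i ^ n ∂σ
      = (∫ w : ℝ, w ^ n * exp (-w ^ 2)) * √π ^ (Fintype.card ι - 1) := by
  have : Nonempty ι := ⟨i⟩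
  have hd : 0 < Fintype.card ι := Fintype.card_pos
  rw [← integral_coord_pow_mul_exp_neg_norm_sq, integral_eq_integral_sphere_integral_Ioi _
    (integrable_coord_pow_mul_exp_neg_norm_sq i n), finrank_euclideanSpace, ← integral_const_mul]
  refine integral_congr_ae (.of_forall fun ξ ↦ ?_)
  have hξ : ‖(ξ : EuclideanSpace ℝ ι)‖ = 1 := norm_eq_of_mem_sphere ξ
  have hradial : ∀ r ∈ Ioi (0 : ℝ), r ^ (Fintype.card ι - 1) •
        ((r • (ξ : EuclideanSpace ℝ ι)) i ^ n * exp (-‖r • (ξ : EuclideanSpace ℝ ι)‖ ^ 2))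
      = (ξ : EuclideanSpace ℝ ι) i ^ n * (r ^ (Fintype.card ι - 1 + n) * exp (-r ^ 2)) := by
    intro r hr
    rw [norm_smul, hξ, mul_one, norm_of_nonneg hr.out.le, PiLp.smul_apply, smul_eq_mul,
      smul_eq_mul, mul_pow, pow_add]
    ring
  dsimp only
  rw [setIntegral_congr_fun measurableSet_Ioi hradial, integral_const_mul,
    integral_Ioi_pow_mul_exp_neg_sq, Nat.cast_add, Nat.cast_sub hd, Nat.cast_one]
  ring_nf

theorem Gamma_add_card_div_two_pos [Nonempty ι] (n : ℕ) :
    0 < Gamma ((n + Fintype.card ι) / 2) := by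
  have : (0 : ℝ) < Fintype.card ι := by exact_mod_cast Fintype.card_pos
  exact Gamma_pos_of_pos (by positivity)

theorem integral_sphere_coord_pow_of_odd (i : ι) {n : ℕ} (hn : Odd n) :
    ∫ ξ : sphere (0 : EuclideanSpace ℝ ι) 1, (ξ : EuclideanSpace ℝ ι) i ^ n ∂σ = 0 := by
  have : Nonempty ι := ⟨i⟩
  have h := Gamma_mul_integral_sphere_coord_pow i n
  rw [integral_pow_mul_exp_neg_sq_of_odd hn, zero_mul] at h
  exact (mul_eq_zero.1 h).resolve_left (by linarith [Gamma_add_card_div_two_pos (ι := ι) n])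

theorem integral_sphere_coord_pow_two_mul (i : ι) (k : ℕ) :
    ∫ ξ : sphere (0 : EuclideanSpace ℝ ι) 1, (ξ : EuclideanSpace ℝ ι) i ^ (2 * k) ∂σ
      = 2 * π ^ ((Fintype.card ι : ℝ) / 2) * (2 * k).factorial
          / (4 ^ k * k.factorial * Gamma (k + Fintype.card ι / 2)) := by
  have : Nonempty ι := ⟨i⟩
  have h := Gamma_mul_integral_sphere_coord_pow i (2 * k)
  have hΓ := Gamma_add_card_div_two_pos (ι := ι) (2 * k)
  rw [integral_pow_two_mul_mul_exp_neg_sq, Gamma_nat_add_half_eq_factorial] at h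
  rw [show ((2 * k : ℕ) + Fintype.card ι : ℝ) / 2 = k + Fintype.card ι / 2 by push_cast; ring]
    at h hΓ
  have hπ : √π * √π ^ (Fintype.card ι - 1) = π ^ ((Fintype.card ι : ℝ) / 2) := by
    rw [← pow_succ', Nat.sub_add_cancel Fintype.card_pos, sqrt_eq_rpow, ← rpow_natCast,
      ← rpow_mul pi_pos.le]
    ring_nf
  rw [← hπ, eq_div_iff (by positivity)]
  calc _ = (Gamma (k + Fintype.card ι / 2) / 2 *
        ∫ ξ : sphere (0 : EuclideanSpace ℝ ι) 1, (ξ : EuclideanSpace ℝ ι) i ^ (2 * k) ∂σ) *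
          (2 * 4 ^ k * k.factorial) := by ring
    _ = _ := by
      rw [h]
      field_simp

theorem hasSum_integral_sphere_exp_mul_coord (i : ι) (a : ℝ) :
    HasSum (fun k : ℕ ↦ 2 * π ^ ((Fintype.card ι : ℝ) / 2) *
        ((a / 2) ^ (2 * k) / (k.factorial * Gamma (k + Fintype.card ι / 2))))
      (∫ ξ : sphere (0 : EuclideanSpace ℝ ι) 1, exp (a * (ξ : EuclideanSpace ℝ ι) i) ∂σ) := by
  have hbound : ∀ᵐ ξ : sphere (0 : EuclideanSpace ℝ ι) 1 ∂σ,
      |a * (ξ : EuclideanSpace ℝ ι) i| ≤ |a| := .of_forall fun ξ ↦ by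
    rw [abs_mul]
    exact mul_le_of_le_one_right (abs_nonneg a) <|
      (PiLp.norm_apply_le (ξ : EuclideanSpace ℝ ι) i).trans (norm_eq_of_mem_sphere ξ).le
  have h :=
    hasSum_integral_pow_div_factorial (Continuous.aestronglyMeasurable (by fun_prop)) hbound
  rw [← (mul_right_injective₀ (two_ne_zero' ℕ)).hasSum_iff] at h
  · convert h using 1
    ext k
    simp only [Function.comp_apply, mul_pow, integral_const_mul, integral_sphere_coord_pow_two_mul]
    rw [div_pow, pow_mul (2 : ℝ)]
    field_simp
    norm_num
  · intro m hm
    have hodd : Odd m := Nat.not_even_iff_odd.1 fun ⟨k, hk⟩ ↦ hm ⟨k, by simp only; omega⟩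
    simp [mul_pow, integral_const_mul, integral_sphere_coord_pow_of_odd i hodd]

theorem integral_sphere_exp_mul_coord (i : ι) {a : ℝ} (ha : 0 < a) :
    ∫ ξ : sphere (0 : EuclideanSpace ℝ ι) 1, exp (a * (ξ : EuclideanSpace ℝ ι) i) ∂σ
      = (2 * π) ^ ((Fintype.card ι : ℝ) / 2 - 1 + 1) * a⁻¹ ^ ((Fintype.card ι : ℝ) / 2 - 1) *
          besselI ((Fintype.card ι : ℝ) / 2 - 1) a := by
  set ν : ℝ := (Fintype.card ι : ℝ) / 2 - 1 with hν
  have hscale : (2 * π) ^ (ν + 1) * a⁻¹ ^ ν * (a / 2) ^ ν = 2 * π ^ (ν + 1) := by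
    rw [mul_assoc, ← mul_rpow (by positivity) (by positivity), inv_mul_eq_div,
      div_div_cancel_left' ha.ne', mul_rpow (by positivity) (by positivity),
      rpow_add_one two_ne_zero, inv_rpow zero_le_two]
    field_simp
  rw [besselI_eq_rpow_mul_tsum ν ha, ← (hasSum_integral_sphere_exp_mul_coord i a).tsum_eq,
    tsum_mul_left, ← mul_assoc, hscale]
  simp only [add_assoc, hν, sub_add_cancel]

end Sphere

theorem EuclideanSpace.norm_single_sub_smul_sq {ι : Type*} [Fintype ι] [DecidableEq ι] (i : ι)
    (x y : ℝ) (v : EuclideanSpace ℝ ι) :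
    ‖EuclideanSpace.single i x - y • v‖ ^ 2 = x ^ 2 + y ^ 2 * ‖v‖ ^ 2 - 2 * x * y * v i := by
  rw [norm_sub_sq_real, PiLp.norm_single, real_inner_smul_right,
    EuclideanSpace.inner_single_left, norm_smul, mul_pow, Real.norm_eq_abs, Real.norm_eq_abs,
    sq_abs, sq_abs]
  simp only [starRingEnd_apply, star_trivial]
  ring

/-- **Lemma 3.5 (Nowak–Roncal):** for `d ≥ 1`, `ν = d/2 - 1` and `x, y, t, c > 0`,
`∫_{S^{d-1}} exp(-|𝚡 - yξ|²/(ct)) dσ(ξ)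
  = (2π)^{ν+1} exp(-(x²+y²)/(ct)) (ct/(2xy))^ν I_ν(2xy/(ct))`,
where `𝚡 = (x,0,…,0)` and `σ` is the (non-normalized) surface measure of the unit
sphere `S^{d-1} ⊂ ℝ^d`. -/
theorem sphere_integral_bessel (d : ℕ) (hd : 0 < d) (x y t c : ℝ)
    (hx : 0 < x) (hy : 0 < y) (ht : 0 < t) (hc : 0 < c) :
    ∫ ξ : Metric.sphere (0 : EuclideanSpace ℝ (Fin d)) 1,
        Real.exp (-‖EuclideanSpace.single (⟨0, hd⟩ : Fin d) x -
            y • (ξ : EuclideanSpace ℝ (Fin d))‖ ^ 2 / (c * t))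
        ∂(volume : Measure (EuclideanSpace ℝ (Fin d))).toSphere =
      (2 * π) ^ ((d : ℝ) / 2 - 1 + 1) * Real.exp (-(x ^ 2 + y ^ 2) / (c * t)) *
        (c * t / (2 * x * y)) ^ ((d : ℝ) / 2 - 1) *
        besselI ((d : ℝ) / 2 - 1) (2 * x * y / (c * t)) := by
  have hsplit (ξ : sphere (0 : EuclideanSpace ℝ (Fin d)) 1) :
      exp (-‖EuclideanSpace.single (⟨0, hd⟩ : Fin d) x - y • (ξ : EuclideanSpace ℝ (Fin d))‖ ^ 2
          / (c * t))
        = exp (-(x ^ 2 + y ^ 2) / (c * t)) *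
            exp (2 * x * y / (c * t) * (ξ : EuclideanSpace ℝ (Fin d)) ⟨0, hd⟩) := by
    rw [EuclideanSpace.norm_single_sub_smul_sq, norm_eq_of_mem_sphere ξ, ← exp_add]
    ring_nf
  rw [integral_congr_ae (.of_forall hsplit), integral_const_mul,
    integral_sphere_exp_mul_coord _ (by positivity), Fintype.card_fin, inv_div]
  ring
end

section
/- For all x, y ∈ (0,1) and t > 0, the Fourier-Bessel Poisson kernel for ν = −1/2 is given by G_t^{−1/2,1}(x,y) = sinh(πt/2) cos(π(x−y)/2) / (cosh(πt) − cos(π(x−y))) + sinh(πt/2) cos(π(x+y)/2) / (cosh(πt) − cos(π(x+y))); that is, ∑_{n≥1} e^{−tπ(n−1/2)} · 2 cos(π(n−1/2)x) cos(π(n−1/2)y) equals the right-hand side. -/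
open Real

/-!
Writing `2 cos(λx) cos(λy) = cos(λ(x - y)) + cos(λ(x + y))` splits the kernel into two series
`∑ e^{-a(n+1/2)} cos(θ(n+1/2))`, each the real part of the half-integer geometric series
`∑ e^{-z(n+1/2)} = 1 / (2 sinh(z/2))` at `z = a + iθ`. Since
`|2 sinh(z/2)|² = 4(sinh²(a/2) + sin²(θ/2)) = 2(cosh a - cos θ)`, that real part is
`sinh(a/2) cos(θ/2) / (cosh a - cos θ)`.
-/

namespace Complex

theorem hasSum_exp_neg_mul_nat_add_half {z : ℂ} (hz : 0 < z.re) :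
    HasSum (fun n : ℕ => exp (-(z * (n + 1 / 2)))) (2 * sinh (z / 2))⁻¹ := by
  have hr : ‖exp (-z)‖ < 1 := by
    rw [norm_exp, neg_re, Real.exp_lt_one_iff]
    linarith
  have hfactor : exp (z / 2) - exp (-(z / 2)) = exp (z / 2) * (1 - exp (-z)) := by
    rw [mul_sub, mul_one, ← exp_add]
    ring_nf
  rw [two_sinh, hfactor, mul_inv, ← exp_neg]
  refine ((hasSum_geometric_of_norm_lt_one hr).mul_left (exp (-(z / 2)))).congr_fun fun n => ?_
  rw [← exp_nat_mul, ← exp_add]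
  ring_nf

theorem two_mul_sinh_half_add_mul_I (a θ : ℝ) :
    2 * sinh ((a + θ * I) / 2) = ↑(2 * Real.sinh (a / 2) * Real.cos (θ / 2)) +
      ↑(2 * Real.cosh (a / 2) * Real.sin (θ / 2)) * I := by
  rw [add_div, mul_div_right_comm, sinh_add, sinh_mul_I, cosh_mul_I]
  push_cast
  ring

theorem re_inv_two_mul_sinh_half_add_mul_I (a θ : ℝ) :
    ((2 * sinh ((a + θ * I) / 2))⁻¹).re =
      Real.sinh (a / 2) * Real.cos (θ / 2) / (Real.cosh a - Real.cos θ) := by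
  have hcosh : Real.cosh a = Real.cosh (a / 2) ^ 2 + Real.sinh (a / 2) ^ 2 := by
    rw [← Real.cosh_two_mul]; ring_nf
  have hcos : Real.cos θ = 2 * Real.cos (θ / 2) ^ 2 - 1 := by
    rw [← Real.cos_two_mul]; ring_nf
  have hnormSq : (2 * Real.sinh (a / 2) * Real.cos (θ / 2)) ^ 2 +
      (2 * Real.cosh (a / 2) * Real.sin (θ / 2)) ^ 2 = 2 * (Real.cosh a - Real.cos θ) := by
    rw [hcosh, hcos]
    linear_combination (4 * Real.sin (θ / 2) ^ 2 - 2) * Real.cosh_sq (a / 2)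
      + (4 * Real.sinh (a / 2) ^ 2 + 4) * Real.sin_sq_add_cos_sq (θ / 2)
  rw [two_mul_sinh_half_add_mul_I, inv_re, normSq_add_mul_I, hnormSq]
  simp only [add_re, ofReal_re, re_ofReal_mul, I_re, mul_zero, add_zero]
  rw [mul_assoc, mul_div_mul_left _ _ two_ne_zero]

end Complex

theorem Real.hasSum_exp_neg_mul_nat_add_half_mul_cos {a : ℝ} (ha : 0 < a) (θ : ℝ) :
    HasSum (fun n : ℕ => exp (-(a * (n + 1 / 2))) * cos (θ * (n + 1 / 2)))
      (sinh (a / 2) * cos (θ / 2) / (cosh a - cos θ)) := by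
  have h := Complex.hasSum_re
    (Complex.hasSum_exp_neg_mul_nat_add_half (z := a + θ * Complex.I) (by simpa using ha))
  rw [Complex.re_inv_two_mul_sinh_half_add_mul_I] at h
  refine h.congr_fun fun n => ?_
  simp [Complex.exp_re]

theorem fb_poisson_kernel_neg_half_general (t x y : ℝ) (ht : 0 < t) :
    ∑' n : ℕ, Real.exp (-t * (π * ((n : ℝ) + 1 / 2))) *
        (2 * Real.cos (π * ((n : ℝ) + 1 / 2) * x) * Real.cos (π * ((n : ℝ) + 1 / 2) * y)) =
      Real.sinh (π * t / 2) * Real.cos (π * (x - y) / 2) /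
          (Real.cosh (π * t) - Real.cos (π * (x - y))) +
        Real.sinh (π * t / 2) * Real.cos (π * (x + y) / 2) /
          (Real.cosh (π * t) - Real.cos (π * (x + y))) := by
  have hπt : 0 < π * t := mul_pos pi_pos ht
  rw [← ((hasSum_exp_neg_mul_nat_add_half_mul_cos hπt (π * (x - y))).add
    (hasSum_exp_neg_mul_nat_add_half_mul_cos hπt (π * (x + y)))).tsum_eq]
  refine tsum_congr fun n => ?_
  have hcos : 2 * cos (π * (n + 1 / 2) * x) * cos (π * (n + 1 / 2) * y) =
      cos (π * (x + y) * (n + 1 / 2)) + cos (π * (x - y) * (n + 1 / 2)) := by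
    rw [cos_add_cos]
    ring_nf
  rw [hcos, neg_mul, ← mul_assoc, mul_comm t π]
  ring

/-- The explicit formula for the Fourier–Bessel Poisson kernel `G_t^{-1/2,1}(x,y)`:
`∑_{n≥1} e^{-tπ(n-1/2)} 2 cos(π(n-1/2)x) cos(π(n-1/2)y)` (here the sum over `n ≥ 1`
is written as a sum over `n : ℕ` via `n - 1/2 ↦ n + 1/2`). -/
theorem fb_poisson_kernel_neg_half (t x y : ℝ) (ht : 0 < t)
    (hx : x ∈ Set.Ioo (0 : ℝ) 1) (hy : y ∈ Set.Ioo (0 : ℝ) 1) :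
    ∑' n : ℕ, Real.exp (-t * (π * ((n : ℝ) + 1 / 2))) *
        (2 * Real.cos (π * ((n : ℝ) + 1 / 2) * x) * Real.cos (π * ((n : ℝ) + 1 / 2) * y)) =
      Real.sinh (π * t / 2) * Real.cos (π * (x - y) / 2) /
          (Real.cosh (π * t) - Real.cos (π * (x - y))) +
        Real.sinh (π * t / 2) * Real.cos (π * (x + y) / 2) /
          (Real.cosh (π * t) - Real.cos (π * (x + y))) :=
  fb_poisson_kernel_neg_half_general t x y ht
end

section
/- For all x, y ∈ (0,1) and t > 0, the Fourier-Bessel heat kernel for ν = −1/2 satisfies G_t^{−1/2,2}(x,y) = ∑_{j∈ℤ} [ (4πt)^{−1/2} exp(−(x−y−4j)²/(4t)) + (4πt)^{−1/2} exp(−(x+y−4j)²/(4t)) − (4πt)^{−1/2} exp(−(x−y−4(j+1/2))²/(4t)) − (4πt)^{−1/2} exp(−(x+y−4(j+1/2))²/(4t)) ]; that is, ∑_{n≥1} e^{−tπ²(n−1/2)²} · 2 cos(π(n−1/2)x) cos(π(n−1/2)y) equals the right-hand side. -/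
/-!
Write `2 cos(λx) cos(λy) = cos(λ(x - y)) + cos(λ(x + y))`. For each `u`, both
`∑ₙ e^{-tπ²(n+1/2)²} cos(π(n+1/2)u)` and the corresponding Gaussian sum equal the heat kernel
of the circle `ℝ/4ℤ` minus its translate by `2`. On the Gaussian side this is Poisson summation
(the Jacobi theta transformation); on the Fourier side, translating by half a period multiplies
the frequency `n` by `(-1)ⁿ`, so only the odd frequencies `2n + 1` survive.
-/

open Real HurwitzZeta

lemma hasSum_comp_two_mul_iff {M : Type*} [AddCommMonoid M] [TopologicalSpace M] {f : ℕ → M}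
    {a : M} (hf : ∀ n, Odd n → f n = 0) : HasSum (fun m => f (2 * m)) a ↔ HasSum f a :=
  (mul_right_injective₀ two_ne_zero).hasSum_iff fun n hn =>
    hf n (Nat.not_even_iff_odd.mp fun ⟨r, hr⟩ => hn ⟨r, by simp only; omega⟩)

lemma hasSum_cosKernel_sub_cosKernel_sub_half (a : ℝ) {s : ℝ} (hs : 0 < s) :
    HasSum (fun m : ℕ => 4 * cos (2 * π * a * (2 * m + 1)) * exp (-π * (2 * m + 1) ^ 2 * s))
      (cosKernel a s - cosKernel ↑(a - 1 / 2) s) := by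
  have h := (hasSum_nat_cosKernel₀ a hs).sub (hasSum_nat_cosKernel₀ (a - 1 / 2) hs)
  rw [sub_sub_sub_cancel_right] at h
  have shift (n : ℕ) :
      cos (2 * π * (a - 1 / 2) * (n + 1)) = (-1) ^ (n + 1) * cos (2 * π * a * (n + 1)) := by
    rw [← cos_sub_nat_mul_pi]; push_cast; ring_nf
  refine ((hasSum_comp_two_mul_iff fun n hn => ?_).mpr h).congr_fun fun m => ?_
  · rw [shift, (Nat.even_add_one.mpr (Nat.not_even_iff_odd.mpr hn)).neg_one_pow]
    ring
  · rw [shift, pow_succ (-1 : ℝ), (even_two_mul m).neg_one_pow]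
    push_cast
    ring

-- `evenKernel_functional_equation` is Poisson summation for the Gaussian.
lemma hasSum_gaussian_periodization {t L : ℝ} (ht : 0 < t) (hL : 0 < L) (u : ℝ) :
    HasSum (fun j : ℤ => 1 / √(4 * π * t) * exp (-(u - L * j) ^ 2 / (4 * t)))
      (cosKernel (u / L) (4 * π * t / L ^ 2) / L) := by
  have hx : 0 < L ^ 2 / (4 * π * t) := by positivity
  have h := (hasSum_int_evenKernel (-(u / L)) hx).mul_left (1 / √(4 * π * t))
  rw [evenKernel_functional_equation, QuotientAddGroup.mk_neg, cosKernel_neg, ← sqrt_eq_rpow,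
    sqrt_div' _ (by positivity), sqrt_sq hL.le, one_div_div (L ^ 2)] at h
  have hsqrt : √(4 * π * t) ≠ 0 := by positivity
  rw [show cosKernel (u / L) (4 * π * t / L ^ 2) / L = 1 / √(4 * π * t) *
      (1 / (L / √(4 * π * t)) * cosKernel (u / L) (4 * π * t / L ^ 2)) by field_simp]
  refine h.congr_fun fun j => ?_
  congr 2
  field_simp
  ring

/-- `G_t(x, y) = D_t(x - y) + D_t(x + y)`, where `D_t` is the heat kernel of `ℝ/4ℤ` minus its
translate by `2`, written via `cosKernel a s = ∑ₙ cos(2πan) e^{-πn²s}` (sum over `n ∈ ℤ`). -/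
noncomputable def antiperiodicHeatKernel (t u : ℝ) : ℝ :=
  (cosKernel ↑(u / 4) (π * t / 4) - cosKernel ↑(u / 4 - 1 / 2) (π * t / 4)) / 4

lemma hasSum_antiperiodicHeatKernel_cos {t : ℝ} (ht : 0 < t) (u : ℝ) :
    HasSum (fun n : ℕ => exp (-t * π ^ 2 * ((n : ℝ) + 1 / 2) ^ 2) *
      cos (π * ((n : ℝ) + 1 / 2) * u)) (antiperiodicHeatKernel t u) := by
  refine ((hasSum_cosKernel_sub_cosKernel_sub_half (u / 4) (by positivity)).div_const 4).congr_fun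
    fun n => ?_
  rw [mul_assoc 4, mul_div_cancel_left₀ _ four_ne_zero, mul_comm]
  congr 2 <;> ring

lemma hasSum_antiperiodicHeatKernel_gaussian {t : ℝ} (ht : 0 < t) (u : ℝ) :
    HasSum (fun j : ℤ => 1 / √(4 * π * t) * exp (-(u - 4 * (j : ℝ)) ^ 2 / (4 * t)) -
        1 / √(4 * π * t) * exp (-(u - 4 * ((j : ℝ) + 1 / 2)) ^ 2 / (4 * t)))
      (antiperiodicHeatKernel t u) := by
  have h := (hasSum_gaussian_periodization ht four_pos u).sub
    (hasSum_gaussian_periodization ht four_pos (u - 2))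
  rw [show 4 * π * t / 4 ^ 2 = π * t / 4 by ring, show (u - 2) / 4 = u / 4 - 1 / 2 by ring,
    ← sub_div] at h
  exact h.congr_fun fun j => by ring_nf

theorem fb_heat_kernel_neg_half_general (t x y : ℝ) (ht : 0 < t) :
    ∑' n : ℕ, Real.exp (-t * π ^ 2 * ((n : ℝ) + 1 / 2) ^ 2) *
        (2 * Real.cos (π * ((n : ℝ) + 1 / 2) * x) * Real.cos (π * ((n : ℝ) + 1 / 2) * y)) =
      ∑' j : ℤ,
        (1 / Real.sqrt (4 * π * t) * Real.exp (-(x - y - 4 * (j : ℝ)) ^ 2 / (4 * t)) +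
          1 / Real.sqrt (4 * π * t) * Real.exp (-(x + y - 4 * (j : ℝ)) ^ 2 / (4 * t)) -
          1 / Real.sqrt (4 * π * t) *
            Real.exp (-(x - y - 4 * ((j : ℝ) + 1 / 2)) ^ 2 / (4 * t)) -
          1 / Real.sqrt (4 * π * t) *
            Real.exp (-(x + y - 4 * ((j : ℝ) + 1 / 2)) ^ 2 / (4 * t))) := by
  have hcos := (hasSum_antiperiodicHeatKernel_cos ht (x - y)).add
    (hasSum_antiperiodicHeatKernel_cos ht (x + y))
  have hgauss := (hasSum_antiperiodicHeatKernel_gaussian ht (x - y)).add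
    (hasSum_antiperiodicHeatKernel_gaussian ht (x + y))
  refine (hcos.congr_fun fun n => ?_).tsum_eq.trans (hgauss.congr_fun fun j => ?_).tsum_eq.symm
  · rw [← mul_add, two_mul_cos_mul_cos, mul_sub, mul_add (π * _)]
  · ring

/-- The Jacobi-type identity for the Fourier–Bessel heat kernel `G_t^{-1/2,2}(x,y)`:
`∑_{n≥1} e^{-tπ²(n-1/2)²} 2 cos(π(n-1/2)x) cos(π(n-1/2)y)` equals a sum of Gaussians
over `ℤ` (the sum over `n ≥ 1` is written as a sum over `n : ℕ` via `n - 1/2 ↦ n + 1/2`). -/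
theorem fb_heat_kernel_neg_half (t x y : ℝ) (ht : 0 < t)
    (hx : x ∈ Set.Ioo (0 : ℝ) 1) (hy : y ∈ Set.Ioo (0 : ℝ) 1) :
    ∑' n : ℕ, Real.exp (-t * π ^ 2 * ((n : ℝ) + 1 / 2) ^ 2) *
        (2 * Real.cos (π * ((n : ℝ) + 1 / 2) * x) * Real.cos (π * ((n : ℝ) + 1 / 2) * y)) =
      ∑' j : ℤ,
        (1 / Real.sqrt (4 * π * t) * Real.exp (-(x - y - 4 * (j : ℝ)) ^ 2 / (4 * t)) +
          1 / Real.sqrt (4 * π * t) * Real.exp (-(x + y - 4 * (j : ℝ)) ^ 2 / (4 * t)) -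
          1 / Real.sqrt (4 * π * t) *
            Real.exp (-(x - y - 4 * ((j : ℝ) + 1 / 2)) ^ 2 / (4 * t)) -
          1 / Real.sqrt (4 * π * t) *
            Real.exp (-(x + y - 4 * ((j : ℝ) + 1 / 2)) ^ 2 / (4 * t))) :=
  fb_heat_kernel_neg_half_general t x y ht
end
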